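/- If ⊢σ P in the well-bracketing type system, then ⊢seq(σ) P in the sequentiality type system, where seq(σ) = 1 if σ begins with an output-tagged continuation name and seq(σ) = 0 otherwise. -/
import Mathlib


/- Formalization of the asynchronous π-calculus (Aπ), its early labelled
   transition system, the sequentiality and well-bracketing type systems,
   and the associated behavioural equivalences, following
   Hirschkoff, Prebet, Sangiorgi, "On sequentiality and well-bracketing
   in the π-calculus". -/

namespace PiCalc

/-- Names are natural numbers. -/
abbrev Name := ℕ

/-- The three kinds of names: output-controlled, input-controlled,
    and continuation names. -/
inductive Kind : Type
  | oc | ic | cn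
deriving DecidableEq

/-- A fixed partition of names into the three kinds. -/
def kind (a : Name) : Kind :=
  if a % 3 = 0 then .oc else if a % 3 = 1 then .ic else .cn

def isOC (a : Name) : Bool := kind a == Kind.oc
def isIC (a : Name) : Bool := kind a == Kind.ic
def isCN (a : Name) : Bool := kind a == Kind.cn
/-- Output-controlled for the purposes of the sequentiality type system
    (continuation names are treated as output-controlled). -/
def isOCt (a : Name) : Bool := isOC a || isCN a
/-- Plain (non-continuation) names. -/
def isPL (a : Name) : Bool := isOC a || isIC a
def noCN (as : List Name) : Prop := ∀ a ∈ as, isPL a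

/- Syntax of Aπ: processes and guards. -/
mutual
inductive Proc : Type
  | out : Name → List Name → Proc            -- ā⟨b̃⟩
  | rep : Name → List Name → Proc → Proc     -- !a(b̃).P
  | par : Proc → Proc → Proc                 -- P | Q
  | res : Name → Proc → Proc                 -- (νa)P
  | guard : Guard → Proc
inductive Guard : Type
  | nil : Guard                              -- 0
  | inp : Name → List Name → Proc → Guard    -- a(b̃).P
  | tau : Proc → Guard                       -- τ.P
  | mat : Name → Name → Guard → Guard        -- [a=b]G
  | sum : Guard → Guard → Guard              -- G + G'
end

/- Free names. -/
mutual
def Proc.fn : Proc → Finset Name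
  | .out a bs => insert a bs.toFinset
  | .rep a bs P => insert a (Proc.fn P \ bs.toFinset)
  | .par P Q => Proc.fn P ∪ Proc.fn Q
  | .res a P => (Proc.fn P).erase a
  | .guard G => Guard.fn G
def Guard.fn : Guard → Finset Name
  | .nil => ∅
  | .inp a bs P => insert a (Proc.fn P \ bs.toFinset)
  | .tau P => Proc.fn P
  | .mat a b G => insert a (insert b (Guard.fn G))
  | .sum G1 G2 => Guard.fn G1 ∪ Guard.fn G2
end

/- All names occurring in a process (free or bound). -/
mutual
def Proc.an : Proc → Finset Name
  | .out a bs => insert a bs.toFinset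
  | .rep a bs P => insert a (bs.toFinset ∪ Proc.an P)
  | .par P Q => Proc.an P ∪ Proc.an Q
  | .res a P => insert a (Proc.an P)
  | .guard G => Guard.an G
def Guard.an : Guard → Finset Name
  | .nil => ∅
  | .inp a bs P => insert a (bs.toFinset ∪ Proc.an P)
  | .tau P => Proc.an P
  | .mat a b G => insert a (insert b (Guard.an G))
  | .sum G1 G2 => Guard.an G1 ∪ Guard.an G2
end

/-- Substitution (a renaming applied to free names). -/
def upd (f : Name → Name) (a : Name) : Name → Name :=
  fun b => if b = a then b else f b
def upds (f : Name → Name) (as : List Name) : Name → Name :=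
  fun b => if b ∈ as then b else f b

mutual
def Proc.subst : Proc → (Name → Name) → Proc
  | .out a bs, f => .out (f a) (bs.map f)
  | .rep a bs P, f => .rep (f a) bs (Proc.subst P (upds f bs))
  | .par P Q, f => .par (Proc.subst P f) (Proc.subst Q f)
  | .res a P, f => .res a (Proc.subst P (upd f a))
  | .guard G, f => .guard (Guard.subst G f)
def Guard.subst : Guard → (Name → Name) → Guard
  | .nil, _ => .nil
  | .inp a bs P, f => .inp (f a) bs (Proc.subst P (upds f bs))
  | .tau P, f => .tau (Proc.subst P f)
  | .mat a b G, f => .mat (f a) (f b) (Guard.subst G f)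
  | .sum G1 G2, f => .sum (Guard.subst G1 f) (Guard.subst G2 f)
end

/-- The substitution mapping the parameters x̃ to the received names b̃. -/
def mkSubst : List Name → List Name → Name → Name
  | x :: xs, b :: bs => fun a => if a = x then b else mkSubst xs bs a
  | _, _ => fun a => a

/-- Iterated restriction (νã)P. -/
def resMany (as : List Name) (P : Proc) : Proc := as.foldr Proc.res P

/-- Actions: τ, free input a⟨b̃⟩, bound output (νc̃)ā⟨b̃⟩. -/
inductive Act : Type
  | tau : Act
  | inp : Name → List Name → Act
  | out : Name → List Name → List Name → Act   -- out a cs bs = (νcs)ā⟨bs⟩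
deriving DecidableEq

def Act.bn : Act → List Name
  | .tau => []
  | .inp _ _ => []
  | .out _ cs _ => cs

def Act.names : Act → List Name
  | .tau => []
  | .inp a bs => a :: bs
  | .out a cs bs => a :: (cs ++ bs)

def Act.fn : Act → Finset Name
  | .tau => ∅
  | .inp a bs => insert a bs.toFinset
  | .out a cs bs => insert a (bs.toFinset \ cs.toFinset)

def Act.subj : Act → Option Name
  | .tau => none
  | .inp a _ => some a
  | .out a _ _ => some a

def Act.objs : Act → List Name
  | .tau => []
  | .inp _ bs => bs
  | .out _ _ bs => bs

/-- The early labelled transition system.  The boolean flag records whether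
    the derivation of the transition uses a communication (rule AComm);
    a τ-transition with flag `true` is an *interaction*. -/
inductive Trans : Proc → Act → Bool → Proc → Prop
  | out (a : Name) (bs : List Name) :
      Trans (.out a bs) (.out a [] bs) false (.guard .nil)
  | inp (a : Name) (xs bs : List Name) (P : Proc) (h : bs.length = xs.length) :
      Trans (.guard (.inp a xs P)) (.inp a bs) false (Proc.subst P (mkSubst xs bs))
  | rep (a : Name) (xs bs : List Name) (P : Proc) (h : bs.length = xs.length) :
      Trans (.rep a xs P) (.inp a bs) false
        (.par (.rep a xs P) (Proc.subst P (mkSubst xs bs)))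
  | tauPre (P : Proc) : Trans (.guard (.tau P)) .tau false P
  | sumL (G1 G2 : Guard) (μ : Act) (f : Bool) (P' : Proc) :
      Trans (.guard G1) μ f P' → Trans (.guard (.sum G1 G2)) μ f P'
  | sumR (G1 G2 : Guard) (μ : Act) (f : Bool) (P' : Proc) :
      Trans (.guard G2) μ f P' → Trans (.guard (.sum G1 G2)) μ f P'
  | mat (a : Name) (G : Guard) (μ : Act) (f : Bool) (P' : Proc) :
      Trans (.guard G) μ f P' → Trans (.guard (.mat a a G)) μ f P'
  | parL (P Q P' : Proc) (μ : Act) (f : Bool) :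
      Trans P μ f P' → (∀ c ∈ Act.bn μ, c ∉ Proc.fn Q) →
      Trans (.par P Q) μ f (.par P' Q)
  | parR (P Q Q' : Proc) (μ : Act) (f : Bool) :
      Trans Q μ f Q' → (∀ c ∈ Act.bn μ, c ∉ Proc.fn P) →
      Trans (.par P Q) μ f (.par P Q')
  | commL (P Q P' Q' : Proc) (a : Name) (cs bs : List Name) (f1 f2 : Bool) :
      Trans P (.out a cs bs) f1 P' → Trans Q (.inp a bs) f2 Q' →
      (∀ c ∈ cs, c ∉ Proc.fn Q) →
      Trans (.par P Q) .tau true (resMany cs (.par P' Q'))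
  | commR (P Q P' Q' : Proc) (a : Name) (cs bs : List Name) (f1 f2 : Bool) :
      Trans P (.inp a bs) f1 P' → Trans Q (.out a cs bs) f2 Q' →
      (∀ c ∈ cs, c ∉ Proc.fn P) →
      Trans (.par P Q) .tau true (resMany cs (.par P' Q'))
  | resI (a : Name) (P P' : Proc) (μ : Act) (f : Bool) :
      Trans P μ f P' → a ∉ Act.names μ → Trans (.res a P) μ f (.res a P')
  | openO (a x : Name) (cs bs : List Name) (P P' : Proc) (f : Bool) :
      Trans P (.out x cs bs) f P' → a ≠ x → a ∈ bs → a ∉ cs →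
      Trans (.res a P) (.out x (a :: cs) bs) f P'

/-- Reductions: τ-transitions. -/
def Step (P P' : Proc) : Prop := ∃ f, Trans P .tau f P'

/-- Interactions: τ-transitions derived from a communication. -/
def Interaction (P P' : Proc) : Prop := Trans P .tau true P'

/-- Weak reduction P ⟹ P'. -/
def WeakTau : Proc → Proc → Prop := Relation.ReflTransGen Step

/-- Weak transition P ⟹ --μ--> ⟹ P'. -/
def Weak (μ : Act) (P P' : Proc) : Prop :=
  ∃ P1 P2, WeakTau P P1 ∧ (∃ f, Trans P1 μ f P2) ∧ WeakTau P2 P'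

/-- Weak hat-transition: for τ this is just ⟹. -/
def WeakHat (μ : Act) (P P' : Proc) : Prop :=
  match μ with
  | .tau => WeakTau P P'
  | _ => Weak μ P P'

/-- Reachability through (strong) transitions. -/
def Reach : Proc → Proc → Prop :=
  Relation.ReflTransGen (fun P P' => ∃ μ f, Trans P μ f P')

/-- Image-finiteness. -/
def ImageFinite (P : Proc) : Prop :=
  ∀ P0, Reach P P0 → ∀ μ, {P' | Weak μ P0 P'}.Finite

/- One-hole contexts. -/
mutual
inductive Ctx : Type
  | hole : Ctx
  | repC : Name → List Name → Ctx → Ctx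
  | parL : Ctx → Proc → Ctx
  | parR : Proc → Ctx → Ctx
  | resC : Name → Ctx → Ctx
  | guardC : GCtx → Ctx
inductive GCtx : Type
  | inpC : Name → List Name → Ctx → GCtx
  | tauC : Ctx → GCtx
  | matC : Name → Name → GCtx → GCtx
  | sumL : GCtx → Guard → GCtx
  | sumR : Guard → GCtx → GCtx
end

mutual
def Ctx.fill : Ctx → Proc → Proc
  | .hole, P => P
  | .repC a bs C, P => .rep a bs (Ctx.fill C P)
  | .parL C Q, P => .par (Ctx.fill C P) Q
  | .parR Q C, P => .par Q (Ctx.fill C P)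
  | .resC a C, P => .res a (Ctx.fill C P)
  | .guardC Gc, P => .guard (GCtx.fill Gc P)
def GCtx.fill : GCtx → Proc → Guard
  | .inpC a bs C, P => .inp a bs (Ctx.fill C P)
  | .tauC C, P => .tau (Ctx.fill C P)
  | .matC a b Gc, P => .mat a b (GCtx.fill Gc P)
  | .sumL Gc G, P => .sum (GCtx.fill Gc P) G
  | .sumR G Gc, P => .sum G (GCtx.fill Gc P)
end

/-- Structural congruence ≡ (standard axioms, closed under all contexts). -/
inductive SCong : Proc → Proc → Prop
  | refl (P : Proc) : SCong P P
  | symm {P Q : Proc} : SCong P Q → SCong Q P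
  | trans {P Q R : Proc} : SCong P Q → SCong Q R → SCong P R
  | parComm (P Q : Proc) : SCong (.par P Q) (.par Q P)
  | parAssoc (P Q R : Proc) : SCong (.par (.par P Q) R) (.par P (.par Q R))
  | parNil (P : Proc) : SCong (.par P (.guard .nil)) P
  | resSwap (a b : Name) (P : Proc) : SCong (.res a (.res b P)) (.res b (.res a P))
  | resNil (a : Name) : SCong (.res a (.guard .nil)) (.guard .nil)
  | scopeExt (a : Name) (P Q : Proc) (h : a ∉ Proc.fn Q) :
      SCong (.par (.res a P) Q) (.res a (.par P Q))
  | ctx (C : Ctx) {P Q : Proc} : SCong P Q → SCong (Ctx.fill C P) (Ctx.fill C Q)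

/-! ### The sequentiality type system -/

/-- ⊢η P for η ∈ {0,1}: η = 1 means P is active (owns the thread). -/
inductive SeqTyped : ℕ → Proc → Prop
  | inpIC {u : Name} {as : List Name} {P : Proc} :
      isIC u → SeqTyped 1 P → SeqTyped 1 (.guard (.inp u as P))
  | inpOC {x : Name} {as : List Name} {P : Proc} :
      isOCt x → SeqTyped 1 P → SeqTyped 0 (.guard (.inp x as P))
  | repOC {x : Name} {as : List Name} {P : Proc} :
      isOCt x → SeqTyped 1 P → SeqTyped 0 (.rep x as P)
  | outOC {x : Name} {as : List Name} :
      isOCt x → SeqTyped 1 (.out x as)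
  | outIC {u : Name} {as : List Name} :
      isIC u → SeqTyped 0 (.out u as)
  | res {η : ℕ} {a : Name} {P : Proc} :
      SeqTyped η P → SeqTyped η (.res a P)
  | nil : SeqTyped 0 (.guard .nil)
  | par {η1 η2 : ℕ} {P Q : Proc} :
      SeqTyped η1 P → SeqTyped η2 Q → η1 + η2 ≤ 1 →
      SeqTyped (η1 + η2) (.par P Q)
  | sum {η : ℕ} {G1 G2 : Guard} :
      SeqTyped η (.guard G1) → SeqTyped η (.guard G2) →
      SeqTyped η (.guard (.sum G1 G2))
  | tauT {η : ℕ} {P : Proc} : SeqTyped η P → SeqTyped η (.guard (.tau P))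
  | mat {a b : Name} {G : Guard} :
      SeqTyped 0 (.guard G) → SeqTyped 0 (.guard (.mat a b G))

def InpAtIC (μ : Act) : Prop := ∃ u bs, μ = .inp u bs ∧ isIC u
def InpAtOC (μ : Act) : Prop := ∃ x bs, μ = .inp x bs ∧ isOCt x
def OutAtOC (μ : Act) : Prop := ∃ x cs bs, μ = .out x cs bs ∧ isOCt x

/-- Type-allowed transitions (η;P) --μ--> P'. -/
def TAT (η : ℕ) (P : Proc) (μ : Act) (P' : Proc) : Prop :=
  SeqTyped η P ∧ (∃ f, Trans P μ f P') ∧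
  (η = 0 ∨ μ = .tau ∨ (η = 1 ∧ (InpAtIC μ ∨ OutAtOC μ)))

def nextEta (η : ℕ) (μ : Act) : ℕ :=
  match μ with
  | .tau => η
  | .inp x _ => if isOCt x then 1 else η
  | .out x _ _ => if isOCt x then 0 else η

/-- Typed transitions (η,P) --μ--> (η',P'). -/
def TTrans (η : ℕ) (P : Proc) (μ : Act) (η' : ℕ) (P' : Proc) : Prop :=
  TAT η P μ P' ∧ η' = nextEta η μ

/-- Observability: the typed weak barb (η;P)⇓a. -/
def Barb (η : ℕ) (P : Proc) (a : Name) : Prop :=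
  ∃ P0 cs bs P1, WeakTau P P0 ∧ TAT η P0 (.out a cs bs) P1

/-! ### Ordinary (early asynchronous weak) bisimilarity -/

def IsBisim (R : Proc → Proc → Prop) : Prop :=
  (∀ P Q, R P Q → R Q P) ∧
  (∀ P Q, R P Q → ∀ μ f P', Trans P μ f P' →
    (∃ Q', WeakHat μ Q Q' ∧ R P' Q') ∨
    (∃ a bs, μ = .inp a bs ∧ ∃ Q', WeakTau (Proc.par Q (.out a bs)) Q' ∧ R P' Q'))

/-- Ordinary bisimilarity P ≈ Q. -/
def Bisim (P Q : Proc) : Prop := ∃ R, IsBisim R ∧ R P Q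

/-! ### Sequential bisimilarity -/

def IsSeqBisim (R : ℕ → Proc → Proc → Prop) : Prop :=
  (∀ η P Q, R η P Q → SeqTyped η P ∧ SeqTyped η Q) ∧
  (∀ η P Q, R η P Q → R η Q P) ∧
  (∀ η P Q, R η P Q → ∀ μ η' P', TTrans η P μ η' P' →
    (∃ Q', WeakHat μ Q Q' ∧ R η' P' Q') ∨
    (∃ a bs, μ = .inp a bs ∧ ∃ Q', WeakTau (Proc.par Q (.out a bs)) Q' ∧ R η' P' Q'))

/-- Sequential bisimilarity at η: P ≈η Q. -/
def SeqBisim (η : ℕ) (P Q : Proc) : Prop := ∃ R, IsSeqBisim R ∧ R η P Q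

/-! ### Barbed bisimulation and barbed equivalence (sequentiality) -/

def IsBarbedBisim (η : ℕ) (R : Proc → Proc → Prop) : Prop :=
  (∀ P Q, R P Q → R Q P) ∧
  (∀ P Q, R P Q → SeqTyped η P ∧ SeqTyped η Q) ∧
  (∀ P Q, R P Q → ∀ P', Step P P' → ∃ Q', WeakTau Q Q' ∧ R P' Q') ∧
  (∀ P Q, R P Q → ∀ a, Barb η P a → Barb η Q a)

/-- Barbed η-bisimilarity. -/
def BarbedBisim (η : ℕ) (P Q : Proc) : Prop := ∃ R, IsBarbedBisim η R ∧ R P Q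

/-- Barbed equivalence at η: testing with all (η'/η) static contexts
    (νã)(R | [·]). -/
def SeqBarbedEq (η : ℕ) (P Q : Proc) : Prop :=
  SeqTyped η P ∧ SeqTyped η Q ∧
  ∀ (η' ηR : ℕ) (as : List Name) (R : Proc),
    SeqTyped ηR R → ηR + η ≤ 1 → η' = ηR + η →
    BarbedBisim η' (resMany as (.par R P)) (resMany as (.par R Q))

/-! ### Stacks and the well-bracketing type system -/

inductive Tag : Type
  | O | I
deriving DecidableEq

abbrev Stack := List (Name × Tag)

/-- Alternation of tags. -/
def alternates : Stack → Prop
  | [] => True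
  | [_] => True
  | (_, t1) :: (q, t2) :: rest => t1 ≠ t2 ∧ alternates ((q, t2) :: rest)

def endsO (σ : Stack) : Prop := ∀ l, σ.getLast? = some l → l.2 = Tag.O

def bothAdj (σ : Stack) : Prop :=
  ∀ p, (p, Tag.O) ∈ σ → (p, Tag.I) ∈ σ →
    ∃ l1 l2, σ = l1 ++ (p, Tag.O) :: (p, Tag.I) :: l2

/-- σ is a well-formed stack. -/
def WFStack (σ : Stack) : Prop :=
  alternates σ ∧ endsO σ ∧ σ.Nodup ∧ bothAdj σ

/-- A stack is clean if no name occurs with both tags. -/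
def CleanS (σ : Stack) : Prop :=
  ∀ p, ¬((p, Tag.O) ∈ σ ∧ (p, Tag.I) ∈ σ)

/-- Order-preserving interleaving of stacks (the result must be a stack). -/
inductive InterAux : Stack → Stack → Stack → Prop
  | nil : InterAux [] [] []
  | right {σ1 σ2 σ3 : Stack} (p : Name) (t : Tag) :
      InterAux σ1 σ2 σ3 → InterAux ((p, t) :: σ1) σ2 ((p, t) :: σ3)
  | left {σ1 σ2 σ3 : Stack} (p : Name) (t : Tag) :
      InterAux σ1 σ2 σ3 → InterAux ((p, t) :: σ1) ((p, t) :: σ2) σ3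

def Interleave (σ σ1 σ2 : Stack) : Prop := WFStack σ ∧ InterAux σ σ1 σ2

/-- The well-bracketing type system ⊢σ P. -/
inductive Typr : Stack → Proc → Prop
  | out1 {p : Name} {as : List Name} :
      isCN p → noCN as → Typr [(p, Tag.O)] (.out p as)
  | out2 {x p : Name} {as : List Name} :
      isOC x → isCN p → noCN as → Typr [(p, Tag.O)] (.out x (as ++ [p]))
  | out3 {u : Name} {as : List Name} :
      isIC u → noCN as → Typr [] (.out u as)
  | inp1 {q p : Name} {as : List Name} {P : Proc} :
      isCN q → isCN p → p ≠ q → noCN as → Typr [(p, Tag.O)] P →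
      Typr [(q, Tag.I), (p, Tag.O)] (.guard (.inp q as P))
  | inp2 {x p : Name} {as : List Name} {P : Proc} :
      isOC x → isCN p → noCN as → Typr [(p, Tag.O)] P →
      Typr [] (.guard (.inp x (as ++ [p]) P))
  | rep2 {x p : Name} {as : List Name} {P : Proc} :
      isOC x → isCN p → noCN as → Typr [(p, Tag.O)] P →
      Typr [] (.rep x (as ++ [p]) P)
  | inp3 {u p : Name} {as : List Name} {P : Proc} :
      isIC u → isCN p → noCN as → Typr [(p, Tag.O)] P →
      Typr [(p, Tag.O)] (.guard (.inp u as P))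
  | nil : Typr [] (.guard .nil)
  | res1 {p : Name} {ξ σ' : Stack} {P : Proc} :
      isCN p → Typr (ξ ++ (p, Tag.O) :: (p, Tag.I) :: σ') P →
      Typr (ξ ++ σ') (.res p P)
  | res2 {p : Name} {σ : Stack} {P : Proc} :
      isCN p → (∀ t, (p, t) ∉ σ) → Typr σ P → Typr σ (.res p P)
  | res3 {a : Name} {σ : Stack} {P : Proc} :
      isPL a → Typr σ P → Typr σ (.res a P)
  | mat {a b : Name} {G : Guard} :
      isPL a → isPL b → Typr [] (.guard G) → Typr [] (.guard (.mat a b G))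
  | par {σ σ1 σ2 : Stack} {P Q : Proc} :
      Typr σ1 P → Typr σ2 Q → Interleave σ σ1 σ2 → Typr σ (.par P Q)
  | tauT {σ : Stack} {P : Proc} :
      Typr σ P → σ.length ≤ 1 → Typr σ (.guard (.tau P))
  | sum {σ : Stack} {G1 G2 : Guard} :
      Typr σ (.guard G1) → Typr σ (.guard G2) → σ.length ≤ 1 →
      Typr σ (.guard (.sum G1 G2))

/-- Forgetting the well-bracketing information of a stack. -/
def seqF : Stack → ℕ
  | (_, Tag.O) :: _ => 1
  | _ => 0

/-- wb-type-allowed transitions ⊢σ P --μ--> P'. -/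
def TyprT (σ : Stack) (P : Proc) (μ : Act) (P' : Proc) : Prop :=
  Typr σ P ∧ TAT (seqF σ) P μ P' ∧
  ∀ p, isCN p → p ∈ Act.fn μ → (∃ t, (p, t) ∈ σ) →
    ∃ t σ', σ = (p, t) :: σ' ∧ ((∃ t', (p, t') ∈ σ') → Act.subj μ ≠ some p)

/-- Evolution of the stack along an action. -/
def stackNext (σ : Stack) (μ : Act) (P' : Proc) (σ' : Stack) : Prop :=
  match μ with
  | .tau =>
      match σ with
      | (p, Tag.O) :: (q, Tag.I) :: σ'' =>
          if p = q ∧ p ∉ Proc.fn P' then σ' = σ'' else σ' = σ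
      | _ => σ' = σ
  | .inp a bs =>
      if isCN a then σ = (a, Tag.I) :: σ'
      else
        match bs.getLast? with
        | some p => if isCN p then σ' = (p, Tag.O) :: σ else σ' = σ
        | none => σ' = σ
  | .out a cs bs =>
      if isCN a then σ = (a, Tag.O) :: σ'
      else
        match bs.getLast? with
        | some p =>
            if isCN p then
              (if p ∈ cs then σ' = (p, Tag.I) :: σ else σ = (p, Tag.O) :: σ')
            else σ' = σ
        | none => σ' = σ

/-- Transitions with stacks (σ,P) --μ--> (σ',P'). -/
def StackTrans (σ : Stack) (P : Proc) (μ : Act) (σ' : Stack) (P' : Proc) : Prop :=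
  TyprT σ P μ P' ∧ stackNext σ μ P' σ'

/-- A clean process: typable with a clean stack. -/
def CleanP (P : Proc) : Prop := ∃ σ, CleanS σ ∧ Typr σ P

/-! ### Discreet processes -/

/- `Proc.avoids p P`: p does not appear as the object of an output in P
    (outside the scope of a rebinding of p). -/
mutual
def Proc.avoids (p : Name) : Proc → Prop
  | .out _ bs => p ∉ bs
  | .rep _ bs P => p ∈ bs ∨ Proc.avoids p P
  | .par P Q => Proc.avoids p P ∧ Proc.avoids p Q
  | .res a P => a = p ∨ Proc.avoids p P
  | .guard G => Guard.avoids p G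
def Guard.avoids (p : Name) : Guard → Prop
  | .nil => True
  | .inp _ bs P => p ∈ bs ∨ Proc.avoids p P
  | .tau P => Proc.avoids p P
  | .mat _ _ G => Guard.avoids p G
  | .sum G1 G2 => Guard.avoids p G1 ∧ Guard.avoids p G2
end

/- Every input subterm x(ã,q).Q at an output-controlled name keeps the
    received continuation name q out of output object position. -/
mutual
def Proc.inpOk : Proc → Prop
  | .out _ _ => True
  | .rep x bs P =>
      Proc.inpOk P ∧
      (isOC x → ∀ q, bs.getLast? = some q → isCN q → Proc.avoids q P)
  | .par P Q => Proc.inpOk P ∧ Proc.inpOk Q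
  | .res _ P => Proc.inpOk P
  | .guard G => Guard.inpOk G
def Guard.inpOk : Guard → Prop
  | .nil => True
  | .inp x bs P =>
      Proc.inpOk P ∧
      (isOC x → ∀ q, bs.getLast? = some q → isCN q → Proc.avoids q P)
  | .tau P => Proc.inpOk P
  | .mat _ _ G => Guard.inpOk G
  | .sum G1 G2 => Guard.inpOk G1 ∧ Guard.inpOk G2
end

/-- Discreet processes. -/
def DiscreetP (P : Proc) : Prop :=
  (∀ p ∈ Proc.fn P, isCN p → Proc.avoids p P) ∧ Proc.inpOk P

/-- Discreet stack transitions: continuation names in the object of μ are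
    not free in σ. -/
def DiscreetTrans (σ : Stack) (P : Proc) (μ : Act) (σ' : Stack) (P' : Proc) : Prop :=
  StackTrans σ P μ σ' P' ∧
  ∀ p, isCN p → p ∈ Act.objs μ → ∀ t, (p, t) ∉ σ

/-! ### Traces, questions and answers -/

/-- Questions: visible actions with a continuation name in object position. -/
def Act.isQuestion (μ : Act) : Prop := μ ≠ .tau ∧ ∃ p ∈ Act.objs μ, isCN p

/-- Answers: visible actions whose subject is a continuation name. -/
def Act.isAnswer (μ : Act) : Prop := ∃ p, Act.subj μ = some p ∧ isCN p

/-- A trace of length n for a discreet and clean process P0 and stack σ0. -/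
structure IsTrace (P0 : Proc) (σ0 : Stack) (n : ℕ)
    (μ : ℕ → Act) (σ : ℕ → Stack) (Pr : ℕ → Proc) : Prop where
  discreet0 : DiscreetP P0
  clean0 : CleanS σ0
  initP : Pr 0 = P0
  initS : σ 0 = σ0
  steps : ∀ j < n, DiscreetTrans (σ j) (Pr j) (μ j) (σ (j + 1)) (Pr (j + 1))
  fresh : ∀ j < n, ∀ p, isCN p → p ∈ Act.objs (μ j) → ∀ i < j, p ∉ Act.names (μ i)

/-- The matching relation μi ↷ μj between questions and answers
    (0-based indices). -/
def Matches (μ : ℕ → Act) (i j : ℕ) : Prop :=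
  i < j ∧
  ((∃ a cs bs p as', isCN p ∧ μ i = .out a cs (bs ++ [p]) ∧ p ∈ cs ∧
      μ j = .inp p as') ∨
   (∃ a bs p cs as', isCN p ∧ μ i = .inp a (bs ++ [p]) ∧
      μ j = .out p cs as'))

/-! ### wb-bisimilarity -/

def IsWbBisim (R : Stack → Proc → Proc → Prop) : Prop :=
  (∀ σ P Q, R σ P Q → Typr σ P ∧ Typr σ Q ∧ DiscreetP P ∧ DiscreetP Q) ∧
  (∀ σ P Q, R σ P Q → R σ Q P) ∧
  (∀ σ P Q, R σ P Q → ∀ μ σ' P', DiscreetTrans σ P μ σ' P' →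
    (∃ Q', WeakHat μ Q Q' ∧ R σ' P' Q') ∨
    (∃ x bs p, isOC x ∧ isCN p ∧ μ = .inp x (bs ++ [p]) ∧
      ∃ q cs Q', isCN q ∧ q ≠ x ∧ q ≠ p ∧ q ∉ bs ∧ q ∉ Proc.fn Q ∧ noCN cs ∧
        WeakTau (Proc.par Q
          (.res q (.par (.out x (bs ++ [q]))
            (.guard (.inp q cs (.out p cs)))))) Q' ∧
        R σ' P' Q') ∨
    (∃ u bs, isIC u ∧ μ = .inp u bs ∧
      ∃ Q', WeakTau (Proc.par Q (.out u bs)) Q' ∧ R σ' P' Q'))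

/-- wb-bisimilarity at σ: P ≈wb^σ Q. -/
def WbBisim (σ : Stack) (P Q : Proc) : Prop := ∃ R, IsWbBisim R ∧ R σ P Q

/-! ### Barbed equivalence and congruence for well-bracketing -/

/-- Observability at a (clean) stack σ, via seqF. -/
def WBarb (σ : Stack) (P : Proc) (a : Name) : Prop := Barb (seqF σ) P a

def IsWBarbedBisim (σ : Stack) (R : Proc → Proc → Prop) : Prop :=
  (∀ P Q, R P Q → R Q P) ∧
  (∀ P Q, R P Q → Typr σ P ∧ Typr σ Q) ∧
  (∀ P Q, R P Q → ∀ P', Step P P' → ∃ Q', WeakTau Q Q' ∧ R P' Q') ∧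
  (∀ P Q, R P Q → ∀ a, WBarb σ P a → WBarb σ Q a)

/-- Barbed σ-bisimilarity. -/
def WBarbBisim (σ : Stack) (P Q : Proc) : Prop := ∃ R, IsWBarbedBisim σ R ∧ R P Q

/-- Typing of one-hole contexts: `CTypr σh σ C` means C is a (σ/σh)
    context (its hole being given type σh). -/
inductive CTypr (σh : Stack) : Stack → Ctx → Prop
  | hole : CTypr σh σh .hole
  | rep2 {x p : Name} {as : List Name} {C : Ctx} :
      isOC x → isCN p → noCN as → CTypr σh [(p, Tag.O)] C →
      CTypr σh [] (.repC x (as ++ [p]) C)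
  | parL {σ σ1 σ2 : Stack} {C : Ctx} {Q : Proc} :
      CTypr σh σ1 C → Typr σ2 Q → Interleave σ σ1 σ2 →
      CTypr σh σ (.parL C Q)
  | parR {σ σ1 σ2 : Stack} {P : Proc} {C : Ctx} :
      Typr σ1 P → CTypr σh σ2 C → Interleave σ σ1 σ2 →
      CTypr σh σ (.parR P C)
  | res1 {p : Name} {ξ σ' : Stack} {C : Ctx} :
      isCN p → CTypr σh (ξ ++ (p, Tag.O) :: (p, Tag.I) :: σ') C →
      CTypr σh (ξ ++ σ') (.resC p C)
  | res2 {p : Name} {σ : Stack} {C : Ctx} :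
      isCN p → (∀ t, (p, t) ∉ σ) → CTypr σh σ C → CTypr σh σ (.resC p C)
  | res3 {a : Name} {σ : Stack} {C : Ctx} :
      isPL a → CTypr σh σ C → CTypr σh σ (.resC a C)
  | ginp1 {q p : Name} {as : List Name} {C : Ctx} :
      isCN q → isCN p → p ≠ q → noCN as → CTypr σh [(p, Tag.O)] C →
      CTypr σh [(q, Tag.I), (p, Tag.O)] (.guardC (.inpC q as C))
  | ginp2 {x p : Name} {as : List Name} {C : Ctx} :
      isOC x → isCN p → noCN as → CTypr σh [(p, Tag.O)] C →
      CTypr σh [] (.guardC (.inpC x (as ++ [p]) C))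
  | ginp3 {u p : Name} {as : List Name} {C : Ctx} :
      isIC u → isCN p → noCN as → CTypr σh [(p, Tag.O)] C →
      CTypr σh [(p, Tag.O)] (.guardC (.inpC u as C))
  | gtau {σ : Stack} {C : Ctx} :
      CTypr σh σ C → σ.length ≤ 1 → CTypr σh σ (.guardC (.tauC C))
  | gmat {a b : Name} {Gc : GCtx} :
      isPL a → isPL b → CTypr σh [] (.guardC Gc) →
      CTypr σh [] (.guardC (.matC a b Gc))
  | gsumL {σ : Stack} {Gc : GCtx} {G : Guard} :
      CTypr σh σ (.guardC Gc) → Typr σ (.guard G) → σ.length ≤ 1 →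
      CTypr σh σ (.guardC (.sumL Gc G))
  | gsumR {σ : Stack} {G : Guard} {Gc : GCtx} :
      Typr σ (.guard G) → CTypr σh σ (.guardC Gc) → σ.length ≤ 1 →
      CTypr σh σ (.guardC (.sumR G Gc))

/-- The static context (νã)(R | [·]). -/
def staticCtx (as : List Name) (R : Proc) : Ctx :=
  as.foldr Ctx.resC (Ctx.parR R Ctx.hole)

/-- Barbed equivalence at σ (testing with clean static contexts). -/
def WBarbedEq (σ : Stack) (P Q : Proc) : Prop :=
  Typr σ P ∧ Typr σ Q ∧
  ∀ (σ' : Stack) (as : List Name) (R : Proc),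
    CleanS σ' → CTypr σ σ' (staticCtx as R) →
    WBarbBisim σ' (Ctx.fill (staticCtx as R) P) (Ctx.fill (staticCtx as R) Q)

/-- Barbed congruence at σ (testing with all clean contexts). -/
def WBarbedCong (σ : Stack) (P Q : Proc) : Prop :=
  Typr σ P ∧ Typr σ Q ∧
  ∀ (σ' : Stack) (C : Ctx),
    CleanS σ' → CTypr σ σ' C →
    WBarbBisim σ' (Ctx.fill C P) (Ctx.fill C Q)

end PiCalc

namespace PiCalc

/-! Auxiliary lemmas for Statement 8. -/

lemma seqF_le_one (σ : Stack) : seqF σ ≤ 1 := by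
  match σ with
  | [] => simp [seqF]
  | (p, Tag.O) :: l => simp [seqF]
  | (p, Tag.I) :: l => simp [seqF]

lemma seqF_consO (p : Name) (l : Stack) : seqF ((p, Tag.O) :: l) = 1 := rfl
lemma seqF_consI (p : Name) (l : Stack) : seqF ((p, Tag.I) :: l) = 0 := rfl
lemma seqF_nil : seqF ([] : Stack) = 0 := rfl

lemma seqF_eq_one {σ : Stack} (h : seqF σ = 1) :
    ∃ p l, σ = (p, Tag.O) :: l := by
  match σ with
  | [] => simp [seqF] at h
  | (p, Tag.O) :: l => exact ⟨p, l, rfl⟩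
  | (p, Tag.I) :: l => simp [seqF] at h

lemma alternates_cons {x : Name × Tag} {l : Stack} (h : alternates (x :: l)) :
    alternates l := by
  match l with
  | [] => trivial
  | y :: l' => exact h.2

lemma alternates_cons_head {x : Name × Tag} {y : Name × Tag} {l : Stack}
    (h : alternates (x :: y :: l)) : x.2 ≠ y.2 := h.1

lemma endsO_nil : endsO ([] : Stack) := by
  intro l hl; simp at hl

lemma endsO_tail {x : Name × Tag} {l : Stack} (h : endsO (x :: l)) :
    endsO l := by
  match l with
  | [] => exact endsO_nil
  | y :: l' =>
    intro a ha
    exact h a (by rwa [List.getLast?_cons_cons])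

lemma endsO_cons_of_ne {x : Name × Tag} {l : Stack} (hl : l ≠ [])
    (h : endsO l) : endsO (x :: l) := by
  match l with
  | [] => exact absurd rfl hl
  | y :: l' =>
    intro a ha
    exact h a (by rwa [List.getLast?_cons_cons] at ha)

lemma endsO_singleO (p : Name) : endsO [(p, Tag.O)] := by
  intro a ha
  simp [List.getLast?] at ha
  subst ha
  rfl

lemma not_endsO_consI_nil (p : Name) : ¬ endsO [(p, Tag.I)] := by
  intro h
  have := h (p, Tag.I) (by simp [List.getLast?])
  simp at this

lemma interAux_nil_left {τ1 τ2 : Stack} (h : InterAux [] τ1 τ2) :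
    τ1 = [] ∧ τ2 = [] := by
  cases h; exact ⟨rfl, rfl⟩

/-- seqF distributes over interleavings of alternating, O-ended stacks. -/
lemma interAux_seqF : ∀ {σ τ1 τ2 : Stack}, InterAux σ τ1 τ2 →
    alternates σ → alternates τ1 → endsO τ1 → alternates τ2 → endsO τ2 →
    seqF σ = seqF τ1 + seqF τ2 := by
  intro σ τ1 τ2 h
  induction h with
  | nil => intros; rfl
  | @right σ0 τ1 τ2' p t h ih =>
    intro hA hA1 hE1 hA2 hE2
    have ih' := ih (alternates_cons hA) hA1 hE1 (alternates_cons hA2)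
      (endsO_tail hE2)
    cases t with
    | O =>
      -- σ head is (p,O); σ0 head cannot be O, so seqF σ0 = 0, hence seqF τ1 = 0
      have hσ0 : seqF σ0 = 0 := by
        match σ0 with
        | [] => rfl
        | (q, t') :: rest =>
          have := alternates_cons_head hA
          cases t' with
          | O => exact absurd rfl this
          | I => rfl
      have h1 : seqF τ1 = 0 := by omega
      rw [seqF_consO, seqF_consO, h1]
    | I =>
      -- τ2 = (p,I)::τ2' ends with O, so τ2' head is O, seqF τ2' = 1
      have hne : τ2' ≠ [] := by
        intro he; subst he; exact not_endsO_consI_nil p hE2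
      have h2' : seqF τ2' = 1 := by
        match τ2' with
        | [] => exact absurd rfl hne
        | (q, t') :: rest =>
          have := alternates_cons_head hA2
          cases t' with
          | O => rfl
          | I => exact absurd rfl this
      have hle := seqF_le_one σ0
      have h1 : seqF τ1 = 0 := by omega
      rw [seqF_consI, seqF_consI, h1]
  | @left σ0 τ1' τ2 p t h ih =>
    intro hA hA1 hE1 hA2 hE2
    have ih' := ih (alternates_cons hA) (alternates_cons hA1)
      (endsO_tail hE1) hA2 hE2
    cases t with
    | O =>
      have hσ0 : seqF σ0 = 0 := by
        match σ0 with
        | [] => rfl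
        | (q, t') :: rest =>
          have := alternates_cons_head hA
          cases t' with
          | O => exact absurd rfl this
          | I => rfl
      have h2 : seqF τ2 = 0 := by omega
      rw [seqF_consO, seqF_consO, h2]
    | I =>
      have hne : τ1' ≠ [] := by
        intro he; subst he; exact not_endsO_consI_nil p hE1
      have h1' : seqF τ1' = 1 := by
        match τ1' with
        | [] => exact absurd rfl hne
        | (q, t') :: rest =>
          have := alternates_cons_head hA1
          cases t' with
          | O => rfl
          | I => exact absurd rfl this
      have hle := seqF_le_one σ0
      have h2 : seqF τ2 = 0 := by omega
      rw [seqF_consI, seqF_consI, h2]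

/-- Removing an adjacent (p,O),(p,I) pair preserves alternation, endsO,
    and the value of seqF. -/
lemma stack_remove (p : Name) :
    ∀ (ξ σ' : Stack),
    alternates (ξ ++ (p, Tag.O) :: (p, Tag.I) :: σ') →
    endsO (ξ ++ (p, Tag.O) :: (p, Tag.I) :: σ') →
    alternates (ξ ++ σ') ∧ endsO (ξ ++ σ') ∧
      seqF (ξ ++ σ') = seqF (ξ ++ (p, Tag.O) :: (p, Tag.I) :: σ') := by
  intro ξ
  induction ξ with
  | nil =>
    intro σ' h1 h2
    simp only [List.nil_append] at *
    match σ' with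
    | [] =>
      exfalso
      have := h2 (p, Tag.I) (by simp [List.getLast?])
      simp at this
    | (q, t) :: rest =>
      have hI : alternates ((p, Tag.I) :: (q, t) :: rest) := h1.2
      have ht : t = Tag.O := by
        have := alternates_cons_head hI
        cases t with
        | O => rfl
        | I => exact absurd rfl this
      subst ht
      refine ⟨alternates_cons hI, endsO_tail (endsO_tail h2), rfl⟩
  | cons x ξ' ih =>
    intro σ' h1 h2
    obtain ⟨a, t⟩ := x
    simp only [List.cons_append] at h1 h2 ⊢
    have h1' := alternates_cons h1
    have h2' := endsO_tail h2
    obtain ⟨A, E, S⟩ := ih σ' h1' h2'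
    have hne : ξ' ++ σ' ≠ [] := by
      intro he
      have hξ : ξ' = [] := by
        cases ξ' with
        | nil => rfl
        | cons y ys => simp at he
      have hσ : σ' = [] := by rw [hξ] at he; simpa using he
      rw [hξ, hσ] at h2'
      simp only [List.nil_append] at h2'
      have := h2' (p, Tag.I) (by simp [List.getLast?])
      simp at this
    refine ⟨?_, endsO_cons_of_ne hne E, ?_⟩
    · -- alternates ((a,t) :: (ξ' ++ σ'))
      cases ξ' with
      | nil =>
        simp only [List.nil_append] at S A h1 ⊢
        have htO : t ≠ Tag.O := alternates_cons_head h1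
        have hS1 : seqF σ' = 1 := S
        obtain ⟨r, l', hrl⟩ := seqF_eq_one hS1
        rw [hrl] at A ⊢
        exact ⟨htO, A⟩
      | cons y ξ'' =>
        obtain ⟨b, s⟩ := y
        simp only [List.cons_append] at A h1 ⊢
        exact ⟨alternates_cons_head h1, A⟩
    · -- seqF equality: both lists start with (a,t)
      cases t with
      | O => rfl
      | I => rfl

/-- Stacks arising in well-bracketing typing derivations alternate and
    end with an output tag. -/
lemma typr_wf : ∀ {σ : Stack} {P : Proc}, Typr σ P →
    alternates σ ∧ endsO σ := by
  intro σ P h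
  induction h with
  | out1 _ _ => exact ⟨trivial, endsO_singleO _⟩
  | out2 _ _ _ => exact ⟨trivial, endsO_singleO _⟩
  | out3 _ _ => exact ⟨trivial, endsO_nil⟩
  | inp1 _ _ _ _ _ ih =>
    refine ⟨⟨by simp, trivial⟩, ?_⟩
    exact endsO_cons_of_ne (by simp) (endsO_singleO _)
  | inp2 _ _ _ _ _ => exact ⟨trivial, endsO_nil⟩
  | rep2 _ _ _ _ _ => exact ⟨trivial, endsO_nil⟩
  | inp3 _ _ _ _ _ => exact ⟨trivial, endsO_singleO _⟩
  | nil => exact ⟨trivial, endsO_nil⟩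
  | res1 _ h ih =>
    obtain ⟨A, E⟩ := ih
    obtain ⟨A', E', _⟩ := stack_remove _ _ _ A E
    exact ⟨A', E'⟩
  | res2 _ _ _ ih => exact ih
  | res3 _ _ ih => exact ih
  | mat _ _ _ _ => exact ⟨trivial, endsO_nil⟩
  | par _ _ hI _ _ => exact ⟨hI.1.1, hI.1.2.1⟩
  | tauT _ _ ih => exact ih
  | sum _ _ _ ih _ => exact ih

lemma isOCt_of_isCN {p : Name} (h : isCN p) : isOCt p := by
  simp [isOCt, h]

lemma isOCt_of_isOC {p : Name} (h : isOC p) : isOCt p := by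
  simp [isOCt, h]

/-- typability for well-bracketing implies typability for
sequentiality, via the forgetful map seqF. -/
theorem typr_seqTyped (σ : Stack) (P : Proc) (h : Typr σ P) :
    SeqTyped (seqF σ) P := by
  induction h with
  | out1 hp _ => exact SeqTyped.outOC (isOCt_of_isCN hp)
  | out2 hx _ _ => exact SeqTyped.outOC (isOCt_of_isOC hx)
  | out3 hu _ => exact SeqTyped.outIC hu
  | inp1 hq _ _ _ _ ih => exact SeqTyped.inpOC (isOCt_of_isCN hq) ih
  | inp2 hx _ _ _ ih => exact SeqTyped.inpOC (isOCt_of_isOC hx) ih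
  | rep2 hx _ _ _ ih => exact SeqTyped.repOC (isOCt_of_isOC hx) ih
  | inp3 hu _ _ _ ih => exact SeqTyped.inpIC hu ih
  | nil => exact SeqTyped.nil
  | res1 _ h ih =>
    obtain ⟨A, E⟩ := typr_wf h
    obtain ⟨_, _, S⟩ := stack_remove _ _ _ A E
    rw [S]
    exact SeqTyped.res ih
  | res2 _ _ _ ih => exact SeqTyped.res ih
  | res3 _ _ ih => exact SeqTyped.res ih
  | mat _ _ _ ih => exact SeqTyped.mat ih
  | par h1 h2 hI ih1 ih2 =>
    have w1 := typr_wf h1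
    have w2 := typr_wf h2
    have e : seqF _ = seqF _ + seqF _ :=
      interAux_seqF hI.2 hI.1.1 w1.1 w1.2 w2.1 w2.2
    rw [e]
    exact SeqTyped.par ih1 ih2 (by rw [← e]; exact seqF_le_one _)
  | tauT _ _ ih => exact SeqTyped.tauT ih
  | sum _ _ _ ih1 ih2 => exact SeqTyped.sum ih1 ih2

end PiCalc
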